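/- Let Δ = [a,b] be a segment and 𝔪 = (Δ₁, …, Δ_N) a Speh multisegment with Δ_{i+1} = Δ_i − 1 for all i. Define the sets X̃ = {i : Δ_i ≺ Δ} and Ỹ = {i : (Δ_i − 1) ≺ Δ}, with the relation j ↝ i iff Δ_i ≺ Δ_j. Then there exists a ↝-matching function from X̃ to Ỹ if and only if Δ₁ does not precede Δ. -/

import Mathlib

/-- A segment `[a, b]` of integers (meaningful when `a ≤ b`). -/
structure Seg where
  a : ℤ
  b : ℤ
deriving DecidableEq

/-- `Δ` is a genuine segment, i.e. `a ≤ b`. -/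
def Seg.IsSeg (Δ : Seg) : Prop := Δ.a ≤ Δ.b

/-- Containment of segments `Δ ⊆ Δ'`. -/
def Seg.Sub (Δ Δ' : Seg) : Prop := Δ'.a ≤ Δ.a ∧ Δ.b ≤ Δ'.b

/-- `Δ` and `Δ'` are linked: their union is again a segment (interval) but neither is
contained in the other. -/
def Seg.Linked (Δ Δ' : Seg) : Prop :=
  max Δ.a Δ'.a ≤ min Δ.b Δ'.b + 1 ∧ ¬ Δ.Sub Δ' ∧ ¬ Δ'.Sub Δ

/-- `Δ` precedes `Δ'` (`Δ ≺ Δ'`): they are linked and `Δ` starts strictly earlier. -/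
def Seg.Prec (Δ Δ' : Seg) : Prop := Δ.Linked Δ' ∧ Δ.a < Δ'.a

/-- The shifted segment `Δ - 1 = [a-1, b-1]`. -/
def Seg.shift (Δ : Seg) : Seg := ⟨Δ.a - 1, Δ.b - 1⟩

/-- There exists a matching function from `X` into `Y` for the relation `R`
(read `R q p` as `q ↝ p`): an injective `f : X → Y` with `f p ↝ p` for all `p ∈ X`. -/
def ExistsMatching {ι : Type*} (X Y : Set ι) (R : ι → ι → Prop) : Prop :=
  ∃ f : X → Y, Function.Injective f ∧ ∀ p : X, R (f p : ι) (p : ι)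

lemma shift_prec (Δ : Seg) (h : Δ.IsSeg) : Δ.shift.Prec Δ := by
  unfold Seg.IsSeg at h
  refine ⟨⟨?_, ?_, ?_⟩, ?_⟩ <;> simp [Seg.shift, Seg.Sub] <;> omega

lemma m_formula (N : ℤ) (m : ℤ → Seg)
    (hSpeh : ∀ i, 0 ≤ i → i + 1 < N → m (i + 1) = (m i).shift) :
    ∀ i, 0 ≤ i → i < N → m i = ⟨(m 0).a - i, (m 0).b - i⟩ := by
  refine Int.le_induction ?_ ?_
  · intro _
    simp only [sub_zero]
  · intro n hn ih hN
    rw [hSpeh n hn hN, ih (by omega)]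
    simp only [Seg.shift, Seg.mk.injEq]
    omega

/-- For a Speh multisegment `𝔪 = (Δ₀, …, Δ_{N-1})` (with `Δ_{i+1} = Δ_i − 1`) and a segment
`Δ`, the condition `RC(Δ, 𝔪)` — existence of a matching function from
`X̃ = {i : Δ_i ≺ Δ}` to `Ỹ = {i : (Δ_i − 1) ≺ Δ}` for the relation `j ↝ i ↔ Δ_i ≺ Δ_j` —
holds iff the first segment `Δ₀` does not precede `Δ`. -/
theorem speh_RC_iff (N : ℤ) (hN : 0 < N) (Δ : Seg) (hΔ : Δ.IsSeg)
    (m : ℤ → Seg) (hm : ∀ i, 0 ≤ i → i < N → (m i).IsSeg)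
    (hSpeh : ∀ i, 0 ≤ i → i + 1 < N → m (i + 1) = (m i).shift) :
    ExistsMatching {i : ℤ | 0 ≤ i ∧ i < N ∧ (m i).Prec Δ}
        {i : ℤ | 0 ≤ i ∧ i < N ∧ (m i).shift.Prec Δ}
        (fun j i => (m i).Prec (m j)) ↔
      ¬ (m 0).Prec Δ := by
  constructor
  · rintro ⟨f, hinj, hR⟩ h0
    have h0mem : (0:ℤ) ∈ {i : ℤ | 0 ≤ i ∧ i < N ∧ (m i).Prec Δ} := ⟨le_refl 0, hN, h0⟩
    set p : {i : ℤ | 0 ≤ i ∧ i < N ∧ (m i).Prec Δ} := ⟨0, h0mem⟩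
    have hRp := hR p
    obtain ⟨hj0, hjN, -⟩ := (f p).2
    have hfm := m_formula N m hSpeh (f p : ℤ) hj0 hjN
    have hlt := hRp.2
    rw [hfm] at hlt
    simp at hlt
    rw [show (p : ℤ) = 0 from rfl] at hlt
    omega
  · intro h0
    have key : ∀ q : {i : ℤ | 0 ≤ i ∧ i < N ∧ (m i).Prec Δ}, 1 ≤ (q : ℤ) := by
      rintro ⟨q, hq0, hqN, hqP⟩
      rcases eq_or_lt_of_le hq0 with h | h
      · exact absurd (h ▸ hqP) h0
      · exact h
    have hsh : ∀ q : {i : ℤ | 0 ≤ i ∧ i < N ∧ (m i).Prec Δ},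
        (m ((q : ℤ) - 1)).shift = m (q : ℤ) := by
      intro q
      have h1 := key q
      have h2 := hSpeh ((q : ℤ) - 1) (by omega) (by have := q.2.2.1; omega)
      rw [sub_add_cancel] at h2
      exact h2.symm
    refine ⟨fun q => ⟨(q : ℤ) - 1, ⟨by have := key q; omega,
      by have := q.2.2.1; omega, by rw [hsh q]; exact q.2.2.2⟩⟩, ?_, ?_⟩
    · intro q r h
      have : (q : ℤ) - 1 = (r : ℤ) - 1 := congrArg Subtype.val h
      exact Subtype.ext (by omega)
    · intro q
      have hseg : (m ((q : ℤ) - 1)).IsSeg :=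
        hm _ (by have := key q; omega) (by have := q.2.2.1; omega)
      have h3 := shift_prec _ hseg
      rwa [hsh q] at h3
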